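/- Let f : ℝ^d → ℝ be m-strongly convex, let λ₁, λ₂ > 0, w ∈ ℕ, τ, z, h ∈ ℝ^d, and define g(u) = min_x [ ‖(x + u + h)/(w+1) − τ‖² + λ₁ f(x) + λ₂ ‖x + u − z‖² ]. Then g is η₂-strongly convex with η₂ = m λ₁ (1 − m λ₁ / η), where η = 2/(w+1)² + m λ₁ + 2λ₂. -/

import Mathlib

/-!
Write the objective as `φ (x + u) + ψ x` with `φ y = ‖(y + h)/(w+1) − τ‖² + λ₂‖y − z‖²`, which is
`α`-strongly convex for `α = 2/(w+1)² + 2λ₂`, and `ψ = λ₁ f`, which is `β`-strongly convex for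
`β = mλ₁`. Comparing the value at `a • u₁ + b • u₂` with the objective at `a • X u₁ + b • X u₂`
gives the strong convexity defect `α/2 ‖Δx + Δu‖² + β/2 ‖Δx‖²`, and minimizing this over `Δx`
leaves `αβ/(α+β) · ‖Δu‖²/2`, which is `η₂ ‖Δu‖²/2`.
-/

open Set

lemma mul_div_add_mul_norm_sub_sq_le {E : Type*} [SeminormedAddCommGroup E] {α β : ℝ}
    (hα : 0 ≤ α) (hβ : 0 ≤ β) (p q : E) :
    α * β / (α + β) * ‖p - q‖ ^ 2 ≤ α * ‖p‖ ^ 2 + β * ‖q‖ ^ 2 := by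
  have hrhs : 0 ≤ α * ‖p‖ ^ 2 + β * ‖q‖ ^ 2 := by positivity
  rcases (add_nonneg hα hβ).eq_or_lt with hsum | hsum
  · rwa [← hsum, div_zero, zero_mul]
  have htri : ‖p - q‖ ^ 2 ≤ (‖p‖ + ‖q‖) ^ 2 := by gcongr; exact norm_sub_le p q
  rw [div_mul_eq_mul_div, div_le_iff₀ hsum]
  calc α * β * ‖p - q‖ ^ 2 ≤ α * β * (‖p‖ + ‖q‖) ^ 2 := by gcongr
    _ ≤ (α * ‖p‖ ^ 2 + β * ‖q‖ ^ 2) * (α + β) := by nlinarith [sq_nonneg (α * ‖p‖ - β * ‖q‖)]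

section NormedSpace

variable {E : Type*} [NormedAddCommGroup E] [NormedSpace ℝ E] {s : Set E} {f g : E → ℝ}
  {m n : ℝ}

lemma StrongConvexOn.add (hf : StrongConvexOn s m f) (hg : StrongConvexOn s n g) :
    StrongConvexOn s (m + n) (f + g) :=
  (UniformConvexOn.add hf hg).mono fun r ↦ le_of_eq <| by simp only [Pi.add_apply]; ring

lemma StrongConvexOn.const_mul {c : ℝ} (hc : 0 ≤ c) (hf : StrongConvexOn s m f) :
    StrongConvexOn s (c * m) fun x ↦ c * f x := by
  refine ⟨hf.1, fun x hx y hy a b ha hb hab ↦ ?_⟩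
  have := mul_le_mul_of_nonneg_left (hf.2 hx hy ha hb hab) hc
  simp only [smul_eq_mul] at this ⊢
  linarith

lemma StrongConvexOn.comp_smul_add (hf : StrongConvexOn univ m f) (k : ℝ) (v : E) :
    StrongConvexOn univ (k ^ 2 * m) fun y ↦ f (k • y + v) := by
  refine ⟨convex_univ, fun x _ y _ a b ha hb hab ↦ ?_⟩
  have hcomb : k • (a • x + b • y) + v = a • (k • x + v) + b • (k • y + v) := by
    conv_lhs => rw [← one_smul ℝ v, ← hab]
    module
  have hdiff : ‖(k • x + v) - (k • y + v)‖ ^ 2 = k ^ 2 * ‖x - y‖ ^ 2 := by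
    rw [add_sub_add_right_eq_sub, ← smul_sub, norm_smul, mul_pow, Real.norm_eq_abs, sq_abs]
  have := hf.2 (mem_univ (k • x + v)) (mem_univ (k • y + v)) ha hb hab
  simp only [hdiff, ← hcomb] at this ⊢
  linarith

theorem StrongConvexOn.partialMin_comp_add_add {φ ψ : E → ℝ} {α β : ℝ}
    (hφ : StrongConvexOn univ α φ) (hψ : StrongConvexOn univ β ψ) (hα : 0 ≤ α) (hβ : 0 ≤ β)
    (X : E → E) (hX : ∀ u x, φ (X u + u) + ψ (X u) ≤ φ (x + u) + ψ x) :
    StrongConvexOn univ (α * β / (α + β)) fun u ↦ φ (X u + u) + ψ (X u) := by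
  refine ⟨convex_univ, fun u₁ _ u₂ _ a b ha hb hab ↦ ?_⟩
  set x₁ := X u₁
  set x₂ := X u₂
  have hsum : a • (x₁ + u₁) + b • (x₂ + u₂) = (a • x₁ + b • x₂) + (a • u₁ + b • u₂) := by module
  have hφ₁₂ := hφ.2 (mem_univ (x₁ + u₁)) (mem_univ (x₂ + u₂)) ha hb hab
  have hψ₁₂ := hψ.2 (mem_univ x₁) (mem_univ x₂) ha hb hab
  rw [hsum] at hφ₁₂
  have hdefect := mul_div_add_mul_norm_sub_sq_le hα hβ (x₁ + u₁ - (x₂ + u₂)) (x₁ - x₂)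
  rw [show x₁ + u₁ - (x₂ + u₂) - (x₁ - x₂) = u₁ - u₂ by abel] at hdefect
  have hab₀ := mul_le_mul_of_nonneg_left hdefect (mul_nonneg ha hb)
  simp only [smul_eq_mul] at hφ₁₂ hψ₁₂ ⊢
  linarith [hX (a • u₁ + b • u₂) (a • x₁ + b • x₂)]

end NormedSpace

lemma strongConvexOn_univ_norm_sq {E : Type*} [NormedAddCommGroup E] [InnerProductSpace ℝ E] :
    StrongConvexOn univ 2 fun x : E ↦ ‖x‖ ^ 2 := by
  rw [strongConvexOn_iff_convex]
  simpa using convexOn_const (0 : ℝ) convex_univ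

/-- the partially minimized objective
`g(u) = min_x [ ‖(x+u+h)/(w+1) − τ‖² + λ₁ f(x) + λ₂‖x+u−z‖² ]`
is `η₂`-strongly convex with `η₂ = m λ₁ (1 − m λ₁/η)`, `η = 2/(w+1)² + m λ₁ + 2λ₂`. -/
theorem stmt_6 (d : ℕ) (f : EuclideanSpace ℝ (Fin d) → ℝ) (m lam₁ lam₂ : ℝ) (w : ℕ)
    (τ z h : EuclideanSpace ℝ (Fin d))
    (hm : 0 < m) (hlam₁ : 0 < lam₁) (hlam₂ : 0 < lam₂)
    (hstrong : StrongConvexOn Set.univ m f)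
    (obj : EuclideanSpace ℝ (Fin d) → EuclideanSpace ℝ (Fin d) → ℝ)
    (hobj : ∀ u xx, obj u xx =
      ‖((w : ℝ) + 1)⁻¹ • (xx + u + h) - τ‖ ^ 2 + lam₁ * f xx + lam₂ * ‖xx + u - z‖ ^ 2)
    (X : EuclideanSpace ℝ (Fin d) → EuclideanSpace ℝ (Fin d))
    (hX : ∀ u xx, obj u (X u) ≤ obj u xx)
    (g : EuclideanSpace ℝ (Fin d) → ℝ)
    (hg : ∀ u, g u = obj u (X u))
    (η η₂ : ℝ)
    (hη : η = 2 / ((w : ℝ) + 1) ^ 2 + m * lam₁ + 2 * lam₂)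
    (hη₂ : η₂ = m * lam₁ * (1 - m * lam₁ / η)) :
    StrongConvexOn Set.univ η₂ g := by
  set k : ℝ := ((w : ℝ) + 1)⁻¹
  set φ : EuclideanSpace ℝ (Fin d) → ℝ := fun y ↦ ‖k • (y + h) - τ‖ ^ 2 + lam₂ * ‖y - z‖ ^ 2
  have hφ_eq :
      φ = (fun y ↦ ‖k • y + (k • h - τ)‖ ^ 2) + fun y ↦ lam₂ * ‖(1 : ℝ) • y + -z‖ ^ 2 := by
    ext y
    simp only [φ, Pi.add_apply, one_smul, ← sub_eq_add_neg, smul_add, add_sub_assoc]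
  have hφ : StrongConvexOn univ (k ^ 2 * 2 + lam₂ * ((1 : ℝ) ^ 2 * 2)) φ := by
    rw [hφ_eq]
    exact (strongConvexOn_univ_norm_sq.comp_smul_add k (k • h - τ)).add
      ((strongConvexOn_univ_norm_sq.comp_smul_add 1 (-z)).const_mul hlam₂.le)
  have hψ := hstrong.const_mul hlam₁.le
  have hobj' : ∀ u x, obj u x = φ (x + u) + lam₁ * f x := fun u x ↦ by rw [hobj]; ring
  have hmin := hφ.partialMin_comp_add_add hψ (by positivity) (by positivity) X
    fun u x ↦ by simpa only [hobj'] using hX u x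
  have hk : k ^ 2 = 1 / ((w : ℝ) + 1) ^ 2 := by rw [inv_pow, one_div]
  have hηpos : 0 < η := by rw [hη]; positivity
  convert hmin using 1
  · rw [hη₂, hk, hη]
    field_simp
    ring
  · ext u
    rw [hg, hobj']
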